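/- arXiv:2208.13487 — 2 statements merged into one kernel-verified Lean document; each statement's English description precedes it below -/
import Mathlib

section
/- Let n ≥ 2 and let y_0, ..., y_{n-2} be nonnegative integers with ∑_{i=0}^{n-2} y_i ≤ n. If 2^{n-1}·(∑_{i=0}^{n-2} y_i) − ∑_{i=0}^{n-2} 2^i · y_i = 2^{n-1}·n − 2^n + 1, then y_i = 1 for all i ∈ {0,...,n-2}. -/
open Finset

private lemma halve (m : ℕ) (z : ℕ → ℤ) :
    ∑ i ∈ range (m+1), 2^i * z i
      = z 0 + 2 * ∑ i ∈ range m, 2^i * z (i+1) := by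
  rw [Finset.sum_range_succ', Finset.mul_sum]
  simp only [pow_zero, one_mul]
  rw [add_comm]
  congr 1
  exact Finset.sum_congr rfl (fun i _ => by ring)

private lemma hite_aux (m : ℕ) (w : ℤ) (hm : 0 < m) :
    ∑ j ∈ range m, 2^j * (if j = 0 then w else 0) = w := by
  rw [Finset.sum_eq_single 0]
  · simp
  · intro b _ hb; simp [hb]
  · intro h; exact absurd (Finset.mem_range.mpr hm) h

private lemma lemA : ∀ (m : ℕ) (z : ℕ → ℤ), (∀ i, i < m → -1 ≤ z i) →
    ∑ i ∈ range m, 2^i * z i = 0 → ∑ i ∈ range m, z i ≤ 0 →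
    ∀ i, i < m → z i = 0 := by
  intro m
  induction m with
  | zero => intro z _ _ _ i hi; omega
  | succ m ih =>
    intro z hz hw hs i hi
    set s := ∑ i ∈ range m, 2^i * z (i+1) with hsdef
    have h0 : z 0 + 2 * s = 0 := by rw [← halve]; exact hw
    have hzz0 := hz 0 (Nat.succ_pos m)
    have hwpos : 0 ≤ -s := by omega
    rcases Nat.eq_zero_or_pos m with hm | hm
    · subst hm
      have : s = 0 := by simp [hsdef]
      interval_cases i
      omega
    · set w := -s with hwdef
      set z' : ℕ → ℤ := fun i => z (i+1) + if i = 0 then w else 0 with hz'def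
      have hz'lb : ∀ j, j < m → -1 ≤ z' j := by
        intro j hj
        have h1 := hz (j+1) (by omega)
        simp only [hz'def]
        by_cases h : j = 0
        · subst h
          rw [if_pos rfl, zero_add]
          have := hz 1 (by omega)
          omega
        · rw [if_neg h]
          omega
      have hsum' : ∑ j ∈ range m, 2^j * z' j = 0 := by
        simp only [hz'def, mul_add, Finset.sum_add_distrib]
        rw [hite_aux m w hm]; omega
      have hsplit : ∑ j ∈ range (m+1), z j = z 0 + ∑ j ∈ range m, z (j+1) := by
        rw [Finset.sum_range_succ']; ring
      have hz'sum : ∑ j ∈ range m, z' j = (∑ j ∈ range m, z (j+1)) + w := by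
        simp only [hz'def, Finset.sum_add_distrib]
        congr 1
        have := hite_aux m w hm
        rw [Finset.sum_eq_single 0]
        · simp
        · intro b _ hb; simp [hb]
        · intro h; exact absurd (Finset.mem_range.mpr hm) h
      have hle : ∑ j ∈ range m, z' j ≤ 0 := by
        rw [hz'sum]; omega
      have hall := ih z' hz'lb hsum' hle
      have hz1 : z 1 = -w := by
        have := hall 0 hm
        simp only [hz'def, reduceIte, zero_add] at this; omega
      have hrest : ∀ j, 1 ≤ j → j < m → z (j+1) = 0 := by
        intro j hj1 hjm
        have := hall j hjm
        simp only [hz'def, if_neg (by omega : j ≠ 0), add_zero] at this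
        exact this
      have hzsum0 : ∑ j ∈ range m, z (j+1) = -w := by
        have h2 : ∑ j ∈ range m, z' j = 0 :=
          Finset.sum_eq_zero (fun j hj => hall j (Finset.mem_range.mp hj))
        omega
      have hw0 : w = 0 := by
        rw [hsplit, hzsum0] at hs
        omega
      match i, hi with
      | 0, _ => omega
      | 1, _ => omega
      | (j+2), hi => exact hrest (j+1) (by omega) (by omega)

private lemma lemB : ∀ (m : ℕ) (z : ℕ → ℤ), (∀ i, i < m → -1 ≤ z i) →
    ∑ i ∈ range m, 2^i * z i = 2^m → 2 ≤ ∑ i ∈ range m, z i := by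
  intro m
  induction m with
  | zero => intro z _ hw; simp at hw
  | succ m ih =>
    intro z hz hw
    set s := ∑ i ∈ range m, 2^i * z (i+1) with hsdef
    have h0 : z 0 + 2 * s = 2^(m+1) := by rw [← halve]; exact hw
    have hzz0 := hz 0 (Nat.succ_pos m)
    have hpow : (2:ℤ)^(m+1) = 2 * 2^m := by ring
    set w := 2^m - s with hwdef
    have hz0 : z 0 = 2 * w := by rw [hwdef]; omega
    have hwpos : 0 ≤ w := by omega
    rcases Nat.eq_zero_or_pos m with hm | hm
    · subst hm
      have hs0 : s = 0 := by simp [hsdef]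
      have hgoal : ∑ i ∈ range (0+1), z i = z 0 := by simp
      rw [hgoal]
      have h2 : (2:ℤ)^(0+1) = 2 := by norm_num
      omega
    · set z' : ℕ → ℤ := fun i => z (i+1) + if i = 0 then w else 0 with hz'def
      have hz'lb : ∀ j, j < m → -1 ≤ z' j := by
        intro j hj
        have h1 := hz (j+1) (by omega)
        simp only [hz'def]
        by_cases h : j = 0
        · subst h
          rw [if_pos rfl, zero_add]
          have := hz 1 (by omega)
          omega
        · rw [if_neg h]
          omega
      have hsum' : ∑ j ∈ range m, 2^j * z' j = 2^m := by
        simp only [hz'def, mul_add, Finset.sum_add_distrib]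
        rw [hite_aux m w hm]; omega
      have h2 := ih z' hz'lb hsum'
      have hz'sum : ∑ j ∈ range m, z' j = (∑ j ∈ range m, z (j+1)) + w := by
        simp only [hz'def, Finset.sum_add_distrib]
        congr 1
        rw [Finset.sum_eq_single 0]
        · simp
        · intro b _ hb; simp [hb]
        · intro h; exact absurd (Finset.mem_range.mpr hm) h
      have hsplit : ∑ j ∈ range (m+1), z j = z 0 + ∑ j ∈ range m, z (j+1) := by
        rw [Finset.sum_range_succ']; ring
      omega

private lemma geom2 : ∀ m : ℕ, ∑ i ∈ range m, (2:ℤ)^i = 2^m - 1 := by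
  intro m
  induction m with
  | zero => simp
  | succ m ih => rw [Finset.sum_range_succ, ih]; ring

/-- Statement (S3): the unique nonnegative solution of
`2^{n-1} (∑ y_i) − ∑ 2^i y_i = 2^{n-1} n − 2^n + 1` with `∑ y_i ≤ n` is the all-ones vector. -/
theorem stmt_2 (n : ℕ) (hn : 2 ≤ n) (y : ℕ → ℕ)
    (hsum : ∑ i ∈ Finset.range (n - 1), y i ≤ n)
    (heq : (2 : ℤ) ^ (n - 1) * (∑ i ∈ Finset.range (n - 1), (y i : ℤ))
        - ∑ i ∈ Finset.range (n - 1), (2 : ℤ) ^ i * (y i : ℤ)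
      = 2 ^ (n - 1) * n - 2 ^ n + 1) :
    ∀ i ∈ Finset.range (n - 1), y i = 1 := by
  obtain ⟨m, rfl⟩ : ∃ m, n = m + 1 := ⟨n - 1, by omega⟩
  have hm1 : 1 ≤ m := by omega
  simp only [Nat.add_sub_cancel] at hsum heq ⊢
  set z : ℕ → ℤ := fun i => (y i : ℤ) - 1 with hzdef
  have hzlb : ∀ i, i < m → -1 ≤ z i := by
    intro i _; simp [hzdef]; omega
  have hS : ∑ i ∈ range m, z i = (∑ i ∈ range m, (y i : ℤ)) - m := by
    simp [hzdef, Finset.sum_sub_distrib]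
  have hW : ∑ i ∈ range m, 2^i * z i
      = (∑ i ∈ range m, 2^i * (y i : ℤ)) - (2^m - 1) := by
    simp only [hzdef, mul_sub, mul_one, Finset.sum_sub_distrib, geom2]
  have hkey : ∑ i ∈ range m, 2^i * z i = 2^m * ∑ i ∈ range m, z i := by
    rw [hW, hS]
    push_cast at heq ⊢
    linear_combination -heq
  have hTle : ∑ i ∈ range m, z i ≤ 1 := by
    have h1 : (∑ i ∈ range m, (y i : ℤ)) ≤ (m:ℤ) + 1 := by exact_mod_cast hsum
    omega
  have hpow : (0:ℤ) < 2^m := by positivity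
  have hlow : -(2^m - 1) ≤ ∑ i ∈ range m, 2^i * z i := by
    rw [← geom2 m, ← Finset.sum_neg_distrib]
    apply Finset.sum_le_sum
    intro i hi
    have h1 := hzlb i (Finset.mem_range.mp hi)
    have h2 : (0:ℤ) < 2^i := by positivity
    nlinarith
  have hT0 : 0 ≤ ∑ i ∈ range m, z i := by
    by_contra h
    push_neg at h
    have h1 : ∑ i ∈ range m, z i ≤ -1 := by omega
    have h3 : 2^m * (∑ i ∈ range m, z i) ≤ 2^m * (-1) := by
      apply mul_le_mul_of_nonneg_left h1 (le_of_lt hpow)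
    rw [hkey] at hlow
    linarith
  have hcases : ∑ i ∈ range m, z i = 0 ∨ ∑ i ∈ range m, z i = 1 := by omega
  rcases hcases with hT | hT
  · intro i hi
    have := lemA m z hzlb (by rw [hkey, hT, mul_zero]) (le_of_eq hT)
    have h := this i (Finset.mem_range.mp hi)
    simp only [hzdef] at h
    omega
  · exfalso
    have := lemB m z hzlb (by rw [hkey, hT, mul_one])
    omega
end

section
/- For nonnegative integers y_0, ..., y_{n-2} with ∑_{i=0}^{n-2} 2^i · y_i = 2^n − 1 (n ≥ 2), the total sum satisfies ∑_{i=0}^{n-2} y_i ≥ n + 1. -/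
lemma key : ∀ m, 1 ≤ m → ∀ y : ℕ → ℕ,
    (∑ i ∈ Finset.range m, 2 ^ i * y i = 2 ^ (m + 1) - 1) →
    m + 2 ≤ ∑ i ∈ Finset.range m, y i := by
  intro m hm
  induction m, hm using Nat.le_induction with
  | base =>
    intro y h
    simp [Finset.sum_range_one] at *
    omega
  | succ m hm ih =>
    intro y heq
    rw [Finset.sum_range_succ'] at heq
    have hT : 2 * (∑ i ∈ Finset.range m, 2 ^ i * y (i + 1)) + y 0 = 2 ^ (m + 2) - 1 := by
      rw [Finset.mul_sum]
      rw [show (∑ i ∈ Finset.range m, 2 * (2 ^ i * y (i + 1)))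
          = ∑ i ∈ Finset.range m, 2 ^ (i + 1) * y (i + 1) from
        Finset.sum_congr rfl (fun i _ => by ring)]
      rw [show m + 1 + 1 = m + 2 from rfl] at heq
      omega
    have hpos : 1 ≤ 2 ^ m := Nat.one_le_two_pow
    have hp2 : 2 ^ (m + 2) = 4 * 2 ^ m := by ring
    have hodd : y 0 % 2 = 1 := by omega
    set a := y 0 / 2 with ha
    have hy0 : y 0 = 2 * a + 1 := by omega
    set z : ℕ → ℕ := fun i => y (i + 1) + (if i = 0 then a else 0) with hz
    have h1 : ∑ i ∈ Finset.range m, 2 ^ i * z i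
        = (∑ i ∈ Finset.range m, 2 ^ i * y (i + 1)) + a := by
      simp only [hz, Nat.mul_add]
      rw [Finset.sum_add_distrib]
      congr 1
      rw [Finset.sum_congr rfl (fun i _ => show 2 ^ i * (if i = 0 then a else 0)
          = if i = 0 then a else 0 by by_cases h : i = 0 <;> simp [h])]
      rw [Finset.sum_ite_eq' (Finset.range m) 0 (fun _ => a)]
      simp [Finset.mem_range]
      omega
    have h1' : ∑ i ∈ Finset.range m, 2 ^ i * z i = 2 ^ (m + 1) - 1 := by
      rw [h1]
      have hp1 : 2 ^ (m + 1) = 2 * 2 ^ m := by ring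
      omega
    have h2 := ih z h1'
    have h3 : ∑ i ∈ Finset.range m, z i
        = (∑ i ∈ Finset.range m, y (i + 1)) + a := by
      simp only [hz]
      rw [Finset.sum_add_distrib]
      congr 1
      rw [Finset.sum_ite_eq' (Finset.range m) 0 (fun _ => a)]
      simp [Finset.mem_range]
      omega
    rw [Finset.sum_range_succ']
    omega


/-- Any representation `∑_{i=0}^{n-2} 2^i y_i = 2^n − 1` with nonnegative integers `y_i`
has total digit sum at least `n + 1`. -/
theorem stmt_6 (n : ℕ) (hn : 2 ≤ n) (y : ℕ → ℕ)
    (heq : ∑ i ∈ Finset.range (n - 1), 2 ^ i * y i = 2 ^ n - 1) :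
    n + 1 ≤ ∑ i ∈ Finset.range (n - 1), y i := by
  have h := key (n - 1) (by omega) y (by rw [show n - 1 + 1 = n by omega]; exact heq)
  omega
end
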